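/- Assume f is irreducible. If there exists a nonzero prolongation A of f (with some character χ), then there exists w ∈ Ŷ with f_{ww} ≠ 0 such that the Gauss space Γ_w has dimension at least 2 (equivalently, Γ_w strictly contains the line ℂ·w); this is the algebraic form of the statement that the Gauss map of the cubic hypersurface Y is degenerate. -/

import Mathlib

/-!
At a point `w` of the cone `f(w,w,w) = 0`, the prolongation identity gives
`f(A w w, w, ·) = (χ w / 2) • f(w, w, ·)`, so `A w w ∈ Γ_w`. If the Gauss map were
nondegenerate, `A w w` would be a multiple of `w` at every smooth point of the cone, i.e. the
`2 × 2` minors of `(A w w, w)` would vanish there. Since `f` is irreducible, so is the cubic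
polynomial `w ↦ f(w,w,w)`, and the Nullstellensatz makes every minor (a cubic) a scalar multiple
of it. The cyclic relation between the minors kills these scalars as soon as `dim W ≥ 3`, and in
dimension at most `2` every cubic form has a linear factor. Hence `A w w ∥ w` for all `w`, and
the prolongation identity then forces `A = 0` (when `χ = 0`) or
`f(w,w,w) = χ(w) · f(w,w,s₀) / χ(s₀)` (when `χ s₀ ≠ 0`).
-/

open MvPolynomial

namespace MvPolynomial

variable {σ R : Type*}

theorem homogeneousComponent_totalDegree_mul [CommSemiring R] (P Q : MvPolynomial σ R) :
    homogeneousComponent (P.totalDegree + Q.totalDegree) (P * Q) =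
      homogeneousComponent P.totalDegree P * homogeneousComponent Q.totalDegree Q := by
  set a := P.totalDegree
  set b := Q.totalDegree
  have hterm : ∀ i j, homogeneousComponent (a + b)
      (homogeneousComponent i P * homogeneousComponent j Q) =
        if a + b = i + j then homogeneousComponent i P * homogeneousComponent j Q else 0 :=
    fun i j => homogeneousComponent_of_mem
      ((homogeneousComponent_isHomogeneous i P).mul (homogeneousComponent_isHomogeneous j Q))
  conv_lhs => rw [← sum_homogeneousComponent P, ← sum_homogeneousComponent Q]
  simp only [Finset.sum_mul_sum, map_sum, hterm]
  rw [Finset.sum_eq_single a, Finset.sum_eq_single b, if_pos rfl]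
  · exact fun j hj hjb => if_neg (by simp at hj; omega)
  · simp [b]
  · exact fun i hi hia => Finset.sum_eq_zero fun j hj => if_neg (by simp at hi hj; omega)
  · simp [a]

theorem IsHomogeneous.eval_eq_coeff_zero [CommSemiring R] {p : MvPolynomial σ R}
    (hp : p.IsHomogeneous 0) (x : σ → R) : eval x p = coeff 0 p := by
  conv_lhs => rw [totalDegree_eq_zero_iff_eq_C.mp (Nat.le_zero.mp hp.totalDegree_le)]
  rw [eval_C]

variable [CommRing R] [IsDomain R]

theorem IsHomogeneous.eq_homogeneousComponent_mul_of_eq_mul {G P Q : MvPolynomial σ R} {d : ℕ}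
    (hG : G.IsHomogeneous d) (hG0 : G ≠ 0) (hPQ : G = P * Q) :
    P.totalDegree + Q.totalDegree = d ∧
      G = homogeneousComponent P.totalDegree P * homogeneousComponent Q.totalDegree Q := by
  have hdeg : P.totalDegree + Q.totalDegree = d := by
    rw [← hG.totalDegree hG0, hPQ, totalDegree_mul_of_isDomain (left_ne_zero_of_mul (hPQ ▸ hG0))
      (right_ne_zero_of_mul (hPQ ▸ hG0))]
  refine ⟨hdeg, ?_⟩
  rw [← homogeneousComponent_totalDegree_mul, ← hPQ, hdeg, homogeneousComponent_of_mem hG,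
    if_pos rfl]

theorem totalDegree_pos_of_not_isUnit {K : Type*} [Field K] {P : MvPolynomial σ K} (hP0 : P ≠ 0)
    (hP : ¬ IsUnit P) : 0 < P.totalDegree := by
  refine Nat.pos_of_ne_zero fun h => hP ?_
  rw [totalDegree_eq_zero_iff_eq_C.mp h]
  exact (Ne.isUnit fun hc => hP0 (by rw [totalDegree_eq_zero_iff_eq_C.mp h, hc, map_zero])).map C

theorem IsHomogeneous.exists_eq_mul_isHomogeneous_one_two {K : Type*} [Field K]
    {G P Q : MvPolynomial σ K} (hG : G.IsHomogeneous 3) (hG0 : G ≠ 0) (hPQ : G = P * Q)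
    (hP : ¬ IsUnit P) (hQ : ¬ IsUnit Q) :
    ∃ L R : MvPolynomial σ K, L.IsHomogeneous 1 ∧ R.IsHomogeneous 2 ∧ G = L * R := by
  obtain ⟨hdeg, hG'⟩ := hG.eq_homogeneousComponent_mul_of_eq_mul hG0 hPQ
  have hP₁ := totalDegree_pos_of_not_isUnit (left_ne_zero_of_mul (hPQ ▸ hG0)) hP
  have hQ₁ := totalDegree_pos_of_not_isUnit (right_ne_zero_of_mul (hPQ ▸ hG0)) hQ
  rcases (by omega : P.totalDegree = 1 ∨ Q.totalDegree = 1) with h | h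
  · exact ⟨_, _, h ▸ homogeneousComponent_isHomogeneous _ _,
      (by omega : Q.totalDegree = 2) ▸ homogeneousComponent_isHomogeneous _ _, hG'⟩
  · exact ⟨_, _, h ▸ homogeneousComponent_isHomogeneous _ _,
      (by omega : P.totalDegree = 2) ▸ homogeneousComponent_isHomogeneous _ _,
      hG'.trans (mul_comm _ _)⟩

theorem eq_C_mul_of_dvd_of_isHomogeneous {G p : MvPolynomial σ R} {d : ℕ}
    (hG : G.IsHomogeneous d) (hG0 : G ≠ 0) (hp : p.IsHomogeneous d) (h : G ∣ p) :
    ∃ c : R, p = C c * G := by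
  obtain ⟨t, rfl⟩ := h
  by_cases ht : t = 0
  · exact ⟨0, by simp [ht]⟩
  refine ⟨t.coeff 0, ?_⟩
  have hGt : G * t ≠ 0 := mul_ne_zero hG0 ht
  have : t.totalDegree = 0 := by
    have := hp.totalDegree hGt
    rw [totalDegree_mul_of_isDomain hG0 ht, hG.totalDegree hG0] at this
    omega
  rw [mul_comm, ← totalDegree_eq_zero_iff_eq_C.mp this]

theorem not_dvd_of_isHomogeneous_of_lt {G q : MvPolynomial σ R} {d e : ℕ}
    (hG : G.IsHomogeneous d) (hG0 : G ≠ 0) (hq : q.IsHomogeneous e) (hq0 : q ≠ 0) (hed : e < d) :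
    ¬ G ∣ q := fun h => by
  have := totalDegree_le_of_dvd_of_isDomain h hq0
  rw [hG.totalDegree hG0, hq.totalDegree hq0] at this
  omega

theorem dvd_of_forall_eval_eq_zero {K : Type*} [Field K] [IsAlgClosed K] [Finite σ]
    {G p : MvPolynomial σ K} (hG : Prime G) (h : ∀ x, eval x G = 0 → eval x p = 0) : G ∣ p := by
  rw [← Ideal.mem_span_singleton, ← ((Ideal.span_singleton_prime hG.ne_zero).mpr hG).radical,
    ← vanishingIdeal_zeroLocus_eq_radical (K := K)]
  exact fun x hx => h x (hx G (Ideal.subset_span rfl))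

theorem eval_eq_zero_of_eval_mul_eq_zero [Infinite R] {p q : MvPolynomial σ R}
    (h : ∀ x, eval x p * eval x q = 0) (hq : ∃ x, eval x q ≠ 0) (x : σ → R) : eval x p = 0 := by
  have hpq : p * q = 0 := MvPolynomial.funext fun x => by simpa using h x
  have hq0 : q ≠ 0 := by rintro rfl; simp at hq
  simp [(mul_eq_zero.mp hpq).resolve_right hq0]

theorem eq_zero_of_sub_mul_X_eq_C_mul {K : Type*} [Field K]
    {P : σ → MvPolynomial σ K} {G : MvPolynomial σ K} (hG : G ≠ 0) {c : σ → σ → K}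
    (h : ∀ i j, P i * X j - P j * X i = C (c i j) * G) {i j k : σ} (hki : k ≠ i) (hkj : k ≠ j) :
    c i j = 0 := by
  classical
  -- the cyclic sum of the `X k * (P i * X j - P j * X i)` vanishes identically
  have hcyc : (C (c i j) * X k + C (c j k) * X i + C (c k i) * X j) * G = 0 := by
    linear_combination -(X k * h i j + X i * h j k + X j * h k i)
  have := congrArg (eval (Pi.single k 1)) ((mul_eq_zero.mp hcyc).resolve_right hG)
  simpa [hki.symm, hkj.symm] using this

end MvPolynomial

section Forms

variable {K W : Type*} [Field K] [AddCommGroup W] [Module K W]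

def HasLinearFactor (f : W →ₗ[K] W →ₗ[K] W →ₗ[K] K) : Prop :=
  ∃ (lam : W →ₗ[K] K) (B : W →ₗ[K] W →ₗ[K] K),
    lam ≠ 0 ∧ B ≠ 0 ∧ (∀ u v : W, B u v = B v u) ∧ ∀ w : W, f w w w = lam w * B w w

theorem LinearMap.eq_zero_of_forall_apply_self_eq_zero [CharZero K] {M : Type*} [AddCommGroup M]
    [Module K M] (A : W →ₗ[K] W →ₗ[K] M) (hA : ∀ u v : W, A u v = A v u)
    (h : ∀ w : W, A w w = 0) : A = 0 := by
  ext u v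
  have huv := h (u + v)
  simp only [map_add, LinearMap.add_apply, h u, h v, hA v u, zero_add, add_zero] at huv
  rw [← two_smul K] at huv
  simpa using huv

theorem hasLinearFactor_of_forall_eq_mul [CharZero K] {f : W →ₗ[K] W →ₗ[K] W →ₗ[K] K}
    (hf : ∃ w : W, f w w w ≠ 0) (lam : W →ₗ[K] K) (B : W →ₗ[K] W →ₗ[K] K)
    (h : ∀ w : W, f w w w = lam w * B w w) : HasLinearFactor f := by
  obtain ⟨w₀, hw₀⟩ := hf
  refine ⟨lam, (2⁻¹ : K) • (B + B.flip), fun hlam => hw₀ ?_, fun hB => hw₀ ?_,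
    fun u v => ?_, fun w => ?_⟩
  · simp [h, hlam]
  · have := LinearMap.congr_fun₂ hB w₀ w₀
    simp only [LinearMap.smul_apply, LinearMap.add_apply, LinearMap.flip_apply,
      LinearMap.zero_apply, smul_eq_mul] at this
    rw [h]
    linear_combination lam w₀ * this
  · simp only [LinearMap.smul_apply, LinearMap.add_apply, LinearMap.flip_apply]
    rw [add_comm]
  · simp only [LinearMap.smul_apply, LinearMap.add_apply, LinearMap.flip_apply, smul_eq_mul, h]
    ring

variable (f : W →ₗ[K] W →ₗ[K] W →ₗ[K] K) (hsym₁ : ∀ u v w : W, f u v w = f v u w)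
  (hsym₂ : ∀ u v w : W, f u v w = f u w v)
include hsym₁ hsym₂

theorem apply_smul_add_cube (a : K) (v p : W) :
    f (a • v + p) (a • v + p) (a • v + p) =
      a ^ 3 * f v v v + 3 * a ^ 2 * f v v p + 3 * a * f v p p + f p p p := by
  have e₁ : f v p v = f v v p := hsym₂ ..
  have e₂ : f p v v = f v v p := by rw [hsym₁, hsym₂]
  have e₃ : f p v p = f v p p := by rw [hsym₁]
  have e₄ : f p p v = f v p p := by rw [hsym₂, hsym₁]
  simp only [map_add, map_smul, LinearMap.add_apply, LinearMap.smul_apply, smul_eq_mul,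
    e₁, e₂, e₃, e₄]
  ring

theorem eq_zero_of_forall_cube_eq_zero [CharZero K] (h : ∀ w : W, f w w w = 0) : f = 0 := by
  have hexp := apply_smul_add_cube f hsym₁ hsym₂
  have h₁ : ∀ u v : W, f u u v + f u v v = 0 := fun u v => by
    have := hexp 1 u v
    simp only [one_smul, h, one_pow, one_mul] at this
    linear_combination -this / 3
  have h₂ : ∀ u v : W, f u u v = 0 := fun u v => by
    have := hexp 2 u v
    simp only [h] at this
    linear_combination (-1 / 6 : K) * this - h₁ u v
  ext u v w
  have := h₂ (u + v) w
  simp only [map_add, LinearMap.add_apply, h₂, zero_add, add_zero, hsym₁ v u] at this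
  simpa using by linear_combination this / 2

theorem exists_bilinear_cube_eq_mul_of_ker [CharZero K] (lam : W →ₗ[K] K) (v : W) (hv : lam v = 1)
    (hker : ∀ w : W, lam w = 0 → f w w w = 0) :
    ∃ B : W →ₗ[K] W →ₗ[K] K, ∀ w : W, f w w w = lam w * B w w := by
  set π : W →ₗ[K] W := LinearMap.id - lam.smulRight v
  have hπ : ∀ w, lam (π w) = 0 := fun w => by simp [π, hv]
  refine ⟨f v v v • lam.smulRight lam + (3 : K) • lam.smulRight ((f v v).comp π)
    + (3 : K) • (f v).compl₁₂ π π, fun w => ?_⟩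
  have hw : w = lam w • v + π w := by simp [π]
  conv_lhs => rw [hw, apply_smul_add_cube f hsym₁ hsym₂, hker _ (hπ w)]
  simp only [LinearMap.add_apply, LinearMap.smul_apply, LinearMap.smulRight_apply,
    LinearMap.comp_apply, LinearMap.compl₁₂_apply, smul_eq_mul]
  ring

end Forms

section LowDimension

variable {K W : Type*} [Field K] [AddCommGroup W] [Module K W] [FiniteDimensional K W]
  (f : W →ₗ[K] W →ₗ[K] W →ₗ[K] K)

theorem exists_ker_cube_eq_zero_of_finrank_eq_one (h : Module.finrank K W = 1) :
    ∃ (lam : W →ₗ[K] K) (v : W), lam v = 1 ∧ ∀ w : W, lam w = 0 → f w w w = 0 := by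
  set b := Module.finBasisOfFinrankEq K W h
  refine ⟨b.coord 0, b 0, by simp, fun w hw => ?_⟩
  have : w = 0 := by
    rw [← b.sum_repr w, Fin.sum_univ_one, ← b.coord_apply, hw, zero_smul]
  simp [this]

variable [IsAlgClosed K] (hsym₁ : ∀ u v w : W, f u v w = f v u w)
  (hsym₂ : ∀ u v w : W, f u v w = f u w v)
include hsym₁ hsym₂

theorem exists_ne_zero_cube_eq_zero_of_finrank_eq_two (h : Module.finrank K W = 2) :
    ∃ u : W, u ≠ 0 ∧ f u u u = 0 := by
  set b := Module.finBasisOfFinrankEq K W h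
  by_cases h₁ : f (b 1) (b 1) (b 1) = 0
  · exact ⟨b 1, b.ne_zero 1, h₁⟩
  set p : Polynomial K := .C (f (b 1) (b 1) (b 1)) * .X ^ 3 + .C (3 * f (b 1) (b 1) (b 0)) * .X ^ 2
    + .C (3 * f (b 1) (b 0) (b 0)) * .X + .C (f (b 0) (b 0) (b 0))
  obtain ⟨r, hr⟩ := IsAlgClosed.exists_root p (by rw [Polynomial.degree_cubic h₁]; simp)
  refine ⟨r • b 1 + b 0, fun h0 => ?_, ?_⟩
  · simpa using congrArg (fun u => b.repr u 0) h0
  · rw [apply_smul_add_cube f hsym₁ hsym₂]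
    simp only [p, Polynomial.IsRoot, Polynomial.eval_add, Polynomial.eval_mul,
      Polynomial.eval_pow, Polynomial.eval_C, Polynomial.eval_X] at hr
    linear_combination hr

theorem exists_ker_cube_eq_zero_of_finrank_eq_two (h : Module.finrank K W = 2) :
    ∃ (lam : W →ₗ[K] K) (v : W), lam v = 1 ∧ ∀ w : W, lam w = 0 → f w w w = 0 := by
  obtain ⟨u, hu, hfu⟩ := exists_ne_zero_cube_eq_zero_of_finrank_eq_two f hsym₁ hsym₂ h
  obtain ⟨v, hli⟩ := exists_linearIndependent_pair_of_one_lt_finrank (R := K) (by omega) hu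
  set b := basisOfLinearIndependentOfCardEqFinrank hli (by simp [h])
  have hb₀ : b 0 = u := by simp [b]
  have hb₁ : b 1 = v := by simp [b]
  refine ⟨b.coord 1, v, by simp [← hb₁], fun w hw => ?_⟩
  have : w = b.repr w 0 • u := by
    conv_lhs => rw [← b.sum_repr w]
    rw [Fin.sum_univ_two, ← b.coord_apply 1, hw, zero_smul, add_zero, hb₀]
  rw [this]
  simp [hfu]

theorem three_le_finrank_of_not_hasLinearFactor [CharZero K] (hf : ∃ w : W, f w w w ≠ 0)
    (hirr : ¬ HasLinearFactor f) : 3 ≤ Module.finrank K W := by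
  by_contra! hlt
  have hpos : Module.finrank K W ≠ 0 := fun h => by
    have := Module.finrank_zero_iff.mp h
    obtain ⟨w, hw⟩ := hf
    exact hw (by simp [Subsingleton.elim w 0])
  obtain ⟨lam, v, hv, hker⟩ : ∃ (lam : W →ₗ[K] K) (v : W), lam v = 1 ∧
      ∀ w : W, lam w = 0 → f w w w = 0 := by
    rcases (by omega : Module.finrank K W = 1 ∨ Module.finrank K W = 2) with h | h
    · exact exists_ker_cube_eq_zero_of_finrank_eq_one f h
    · exact exists_ker_cube_eq_zero_of_finrank_eq_two f hsym₁ hsym₂ h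
  obtain ⟨B, hB⟩ := exists_bilinear_cube_eq_mul_of_ker f hsym₁ hsym₂ lam v hv hker
  exact hirr (hasLinearFactor_of_forall_eq_mul hf lam B hB)

end LowDimension

section Coordinates

variable {K W ι : Type*} [Field K] [AddCommGroup W] [Module K W] [Fintype ι]
  (b : Module.Basis ι K W)

noncomputable def quadraticPoly (B : W →ₗ[K] W →ₗ[K] K) : MvPolynomial ι K :=
  ∑ i, ∑ j, C (B (b i) (b j)) * X i * X j

noncomputable def cubicPoly (f : W →ₗ[K] W →ₗ[K] W →ₗ[K] K) : MvPolynomial ι K :=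
  ∑ i, ∑ j, ∑ k, C (f (b i) (b j) (b k)) * X i * X j * X k

theorem isHomogeneous_quadraticPoly (B : W →ₗ[K] W →ₗ[K] K) :
    (quadraticPoly b B).IsHomogeneous 2 :=
  IsHomogeneous.sum _ _ _ fun i _ => IsHomogeneous.sum _ _ _ fun j _ =>
    (isHomogeneous_C_mul_X _ i).mul (isHomogeneous_X K j)

theorem isHomogeneous_cubicPoly (f : W →ₗ[K] W →ₗ[K] W →ₗ[K] K) :
    (cubicPoly b f).IsHomogeneous 3 :=
  IsHomogeneous.sum _ _ _ fun i _ => IsHomogeneous.sum _ _ _ fun j _ =>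
    IsHomogeneous.sum _ _ _ fun k _ =>
      ((isHomogeneous_C_mul_X _ i).mul (isHomogeneous_X K j)).mul (isHomogeneous_X K k)

theorem eval_quadraticPoly (B : W →ₗ[K] W →ₗ[K] K) (w : W) :
    eval (b.equivFun w) (quadraticPoly b B) = B w w := by
  conv_rhs => rw [← b.sum_repr w]
  simp only [quadraticPoly, map_sum, LinearMap.sum_apply, map_smul, LinearMap.smul_apply,
    smul_eq_mul, eval_mul, eval_C, eval_X, Module.Basis.equivFun_apply, Finset.mul_sum]
  rw [Finset.sum_comm]
  refine Finset.sum_congr rfl fun i _ => Finset.sum_congr rfl fun j _ => ?_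
  ring

theorem eval_cubicPoly (f : W →ₗ[K] W →ₗ[K] W →ₗ[K] K) (w : W) :
    eval (b.equivFun w) (cubicPoly b f) = f w w w := by
  conv_rhs => rw [← b.sum_repr w]
  simp only [cubicPoly, map_sum, LinearMap.sum_apply, map_smul, LinearMap.smul_apply,
    smul_eq_mul, eval_mul, eval_C, eval_X, Module.Basis.equivFun_apply, Finset.mul_sum]
  conv_rhs => rw [Finset.sum_comm]; enter [2, j]; rw [Finset.sum_comm]
  conv_rhs => rw [Finset.sum_comm]
  refine Finset.sum_congr rfl fun i _ => Finset.sum_congr rfl fun j _ =>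
    Finset.sum_congr rfl fun k _ => ?_
  ring

theorem exists_linearMap_eval_eq_of_isHomogeneous_one {L : MvPolynomial ι K}
    (hL : L.IsHomogeneous 1) : ∃ lam : W →ₗ[K] K, ∀ w : W, eval (b.equivFun w) L = lam w := by
  refine ⟨∑ i, coeff 0 (pderiv i L) • b.coord i, fun w => ?_⟩
  conv_lhs => rw [← one_smul ℕ L, ← hL.sum_X_mul_pderiv]
  simp only [map_sum, eval_mul, eval_X, (hL.pderiv (i := _)).eval_eq_coeff_zero,
    LinearMap.sum_apply, LinearMap.smul_apply, Module.Basis.coord_apply,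
    Module.Basis.equivFun_apply, smul_eq_mul, mul_comm]

theorem exists_bilinear_eval_eq_of_isHomogeneous_two [CharZero K] {Q : MvPolynomial ι K}
    (hQ : Q.IsHomogeneous 2) :
    ∃ B : W →ₗ[K] W →ₗ[K] K, ∀ w : W, eval (b.equivFun w) Q = B w w := by
  choose ℓ hℓ using fun i => exists_linearMap_eval_eq_of_isHomogeneous_one b (hQ.pderiv (i := i))
  refine ⟨(2⁻¹ : K) • ∑ i, (b.coord i).smulRight (ℓ i), fun w => ?_⟩
  have hEuler := congrArg (eval (b.equivFun w)) hQ.sum_X_mul_pderiv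
  simp only [map_sum, eval_mul, eval_X, hℓ, nsmul_eq_mul, Nat.cast_ofNat, map_ofNat] at hEuler
  simp only [LinearMap.smul_apply, LinearMap.sum_apply, LinearMap.smulRight_apply,
    Module.Basis.coord_apply, smul_eq_mul, ← Module.Basis.equivFun_apply, hEuler]
  field_simp

end Coordinates

section Irreducible

variable {K W ι : Type*} [Field K] [CharZero K] [AddCommGroup W] [Module K W] [Fintype ι]
  (b : Module.Basis ι K W) {f : W →ₗ[K] W →ₗ[K] W →ₗ[K] K}

theorem irreducible_cubicPoly (hf : ∃ w : W, f w w w ≠ 0) (hirr : ¬ HasLinearFactor f) :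
    Irreducible (cubicPoly b f) := by
  have hG0 : cubicPoly b f ≠ 0 := fun h => by
    obtain ⟨w, hw⟩ := hf
    rw [← eval_cubicPoly b, h, map_zero] at hw
    exact hw rfl
  have hG := isHomogeneous_cubicPoly b f
  refine ⟨fun hu => ?_, fun P Q hPQ => ?_⟩
  · have := (isUnit_iff_totalDegree_of_isReduced.mp hu).2
    rw [hG.totalDegree hG0] at this
    omega
  by_contra! hPQu
  obtain ⟨L, R, hL, hR, hLR⟩ := hG.exists_eq_mul_isHomogeneous_one_two hG0 hPQ hPQu.1 hPQu.2
  obtain ⟨lam, hlam⟩ := exists_linearMap_eval_eq_of_isHomogeneous_one b hL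
  obtain ⟨B, hB⟩ := exists_bilinear_eval_eq_of_isHomogeneous_two b hR
  exact hirr (hasLinearFactor_of_forall_eq_mul hf lam B fun w => by
    rw [← eval_cubicPoly b, hLR, map_mul, hlam, hB])

end Irreducible

section Density

variable {K W : Type*} [Field K] [Infinite K] [AddCommGroup W] [Module K W] [FiniteDimensional K W]

theorem LinearMap.apply_self_eq_zero_of_mul_apply_self_eq_zero (B B' : W →ₗ[K] W →ₗ[K] K)
    (h : ∀ w : W, B w w * B' w w = 0) (hB' : ∃ w : W, B' w w ≠ 0) (w : W) : B w w = 0 := by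
  set b := Module.finBasis K W
  rw [← eval_quadraticPoly b]
  refine eval_eq_zero_of_eval_mul_eq_zero (q := quadraticPoly b B') (fun x => ?_) ?_ _
  · obtain ⟨w, rfl⟩ := b.equivFun.surjective x
    rw [eval_quadraticPoly, eval_quadraticPoly, h]
  · obtain ⟨w, hw⟩ := hB'
    exact ⟨b.equivFun w, by rwa [eval_quadraticPoly]⟩

theorem LinearMap.apply_self_eq_zero_of_mul_cube_eq_zero (B : W →ₗ[K] W →ₗ[K] K)
    (f : W →ₗ[K] W →ₗ[K] W →ₗ[K] K) (h : ∀ w : W, B w w * f w w w = 0)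
    (hf : ∃ w : W, f w w w ≠ 0) (w : W) : B w w = 0 := by
  set b := Module.finBasis K W
  rw [← eval_quadraticPoly b]
  refine eval_eq_zero_of_eval_mul_eq_zero (q := cubicPoly b f) (fun x => ?_) ?_ _
  · obtain ⟨w, rfl⟩ := b.equivFun.surjective x
    rw [eval_quadraticPoly, eval_cubicPoly, h]
  · obtain ⟨w, hw⟩ := hf
    exact ⟨b.equivFun w, by rwa [eval_cubicPoly]⟩

end Density

section Wedge

theorem Module.Basis.exists_eq_smul_of_repr_mul_comm {K W ι : Type*} [Field K] [AddCommGroup W]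
    [Module K W] (b : Module.Basis ι K W) {v w : W} (hw : w ≠ 0)
    (h : ∀ i j, b.repr v i * b.repr w j = b.repr v j * b.repr w i) : ∃ a : K, v = a • w := by
  obtain ⟨j, hj⟩ : ∃ j, b.repr w j ≠ 0 := by
    by_contra! h0
    exact hw (b.ext_elem fun i => by simp [h0])
  refine ⟨b.repr v j / b.repr w j, b.ext_elem fun i => ?_⟩
  simp only [map_smul, Finsupp.smul_apply, smul_eq_mul]
  field_simp
  linear_combination h i j

variable {K W ι : Type*} [Field K] [AddCommGroup W] [Module K W] [Fintype ι]
  (b : Module.Basis ι K W)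

noncomputable def wedgePoly (A : W →ₗ[K] W →ₗ[K] W) (i j : ι) : MvPolynomial ι K :=
  quadraticPoly b (A.compr₂ (b.coord i)) * X j - quadraticPoly b (A.compr₂ (b.coord j)) * X i

theorem isHomogeneous_wedgePoly (A : W →ₗ[K] W →ₗ[K] W) (i j : ι) :
    (wedgePoly b A i j).IsHomogeneous 3 :=
  ((isHomogeneous_quadraticPoly b _).mul (isHomogeneous_X K j)).sub
    ((isHomogeneous_quadraticPoly b _).mul (isHomogeneous_X K i))

theorem eval_wedgePoly (A : W →ₗ[K] W →ₗ[K] W) (i j : ι) (w : W) :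
    eval (b.equivFun w) (wedgePoly b A i j) =
      b.repr (A w w) i * b.repr w j - b.repr (A w w) j * b.repr w i := by
  rw [wedgePoly, map_sub, map_mul, map_mul, eval_quadraticPoly, eval_quadraticPoly]
  simp

end Wedge

section Smooth

variable {K W : Type*} [Field K] [CharZero K] [IsAlgClosed K] [AddCommGroup W] [Module K W]
  [FiniteDimensional K W] {f : W →ₗ[K] W →ₗ[K] W →ₗ[K] K}

theorem exists_wedgePoly_eq_C_mul_cubicPoly (hf : ∃ w : W, f w w w ≠ 0)
    (hirr : ¬ HasLinearFactor f) (A : W →ₗ[K] W →ₗ[K] W)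
    (hsmooth : ∀ w : W, f w w w = 0 → f w w ≠ 0 → ∃ a : K, A w w = a • w) (i j) :
    ∃ c : K, wedgePoly (Module.finBasis K W) A i j = C c * cubicPoly (Module.finBasis K W) f := by
  set b := Module.finBasis K W
  have hG := isHomogeneous_cubicPoly b f
  have hGp : Prime (cubicPoly b f) := (irreducible_cubicPoly b hf hirr).prime
  obtain ⟨w₀, hw₀⟩ := hf
  obtain ⟨k, hk⟩ : ∃ k, f w₀ w₀ (b k) ≠ 0 := by
    by_contra! h
    exact hw₀ (by rw [b.ext (f₁ := f w₀ w₀) (f₂ := 0) h, LinearMap.zero_apply])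
  have hq0 : quadraticPoly b (f.compr₂ (LinearMap.applyₗ (b k))) ≠ 0 := fun h => hk <| by
    have := eval_quadraticPoly b (f.compr₂ (LinearMap.applyₗ (b k))) w₀
    rw [h, map_zero] at this
    simpa using this.symm
  -- `hsmooth` says nothing at the singular points of the cone, where the second factor vanishes
  have hdvd : cubicPoly b f ∣
      wedgePoly b A i j * quadraticPoly b (f.compr₂ (LinearMap.applyₗ (b k))) :=
    dvd_of_forall_eval_eq_zero hGp fun x hx => by
      obtain ⟨w, rfl⟩ := b.equivFun.surjective x
      rw [eval_cubicPoly] at hx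
      rw [map_mul, eval_wedgePoly, eval_quadraticPoly]
      by_cases hww : f w w = 0
      · simp [hww]
      obtain ⟨a, ha⟩ := hsmooth w hx hww
      simp only [ha, map_smul, Finsupp.smul_apply, smul_eq_mul]
      ring
  exact eq_C_mul_of_dvd_of_isHomogeneous hG hGp.ne_zero (isHomogeneous_wedgePoly b A i j) <|
    (hGp.dvd_or_dvd hdvd).resolve_right
      (not_dvd_of_isHomogeneous_of_lt hG hGp.ne_zero (isHomogeneous_quadraticPoly b _) hq0
        (by norm_num))

theorem forall_apply_self_eq_smul_of_smooth (hf : ∃ w : W, f w w w ≠ 0)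
    (hirr : ¬ HasLinearFactor f) (h3 : 3 ≤ Module.finrank K W) (A : W →ₗ[K] W →ₗ[K] W)
    (hsmooth : ∀ w : W, f w w w = 0 → f w w ≠ 0 → ∃ a : K, A w w = a • w) (w : W) :
    ∃ a : K, A w w = a • w := by
  set b := Module.finBasis K W
  choose c hc using exists_wedgePoly_eq_C_mul_cubicPoly hf hirr A hsmooth
  have hG0 : cubicPoly b f ≠ 0 := (irreducible_cubicPoly b hf hirr).ne_zero
  have hc0 : ∀ i j, c i j = 0 := fun i j => by
    obtain ⟨k, hki, hkj⟩ := Fin.exists_ne_and_ne_of_two_lt i j h3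
    exact eq_zero_of_sub_mul_X_eq_C_mul hG0 hc hki hkj
  by_cases hw : w = 0
  · exact ⟨0, by simp [hw]⟩
  refine b.exists_eq_smul_of_repr_mul_comm hw fun i j => ?_
  have := congrArg (eval (b.equivFun w)) (hc i j)
  rw [eval_wedgePoly, hc0, map_zero, zero_mul, map_zero] at this
  exact sub_eq_zero.mp this

end Smooth

section Prolongation

variable {K W : Type*} [Field K] [AddCommGroup W] [Module K W]

def IsProlongation (f : W →ₗ[K] W →ₗ[K] W →ₗ[K] K) (A : W →ₗ[K] W →ₗ[K] W) (χ : W →ₗ[K] K) :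
    Prop :=
  ∀ s u v w : W, f (A w u) v s + f u (A w v) s + f u v (A w s) = χ w * f u v s

namespace IsProlongation

variable {f : W →ₗ[K] W →ₗ[K] W →ₗ[K] K} {A : W →ₗ[K] W →ₗ[K] W} {χ : W →ₗ[K] K}
  (hA : IsProlongation f A χ) (hsym₁ : ∀ u v w : W, f u v w = f v u w)
  (hsym₂ : ∀ u v w : W, f u v w = f u w v) (hAsym : ∀ u v : W, A u v = A v u)
include hA hsym₁ hsym₂

theorem three_mul_apply (w x : W) : 3 * f w w (A x w) = χ x * f w w w := by
  have h := hA w w w x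
  rw [hsym₁ (A x w), hsym₂ w (A x w)] at h
  linear_combination h

variable [CharZero K]
include hAsym

theorem two_mul_apply_self (w s : W) :
    2 * f (A w w) w s = χ w * f w w s - χ s * f w w w / 3 := by
  have h := hA s w w w
  rw [hsym₁ w (A w w), hAsym w s] at h
  linear_combination h - three_mul_apply hA hsym₁ hsym₂ w s / 3

theorem apply_self_eq_smul_of_apply_self_eq_zero {w : W} (hw : f w w w = 0) :
    f (A w w) w = (χ w / 2) • f w w := by
  ext s
  have := two_mul_apply_self hA hsym₁ hsym₂ hAsym w s
  rw [hw] at this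
  simp only [LinearMap.smul_apply, smul_eq_mul]
  linear_combination this / 2

theorem sub_mul_apply_of_apply_self_eq_smul {w : W} {a : K} (ha : A w w = a • w) (s : W) :
    (χ w - 2 * a) * f w w s = χ s * f w w w / 3 := by
  have := two_mul_apply_self hA hsym₁ hsym₂ hAsym w s
  simp only [ha, map_smul, LinearMap.smul_apply, smul_eq_mul] at this
  linear_combination -this

variable [FiniteDimensional K W]

theorem eq_zero_of_forall_apply_self_eq_smul (hχ : χ = 0) (hf : ∃ w : W, f w w w ≠ 0)
    (hrad : ∀ w : W, ∃ a : K, A w w = a • w) : A = 0 := by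
  obtain ⟨w₀, hw₀⟩ := hf
  set b := Module.finBasis K W
  refine LinearMap.eq_zero_of_forall_apply_self_eq_zero A hAsym fun w => b.ext_elem fun i => ?_
  rw [map_zero, Finsupp.zero_apply]
  refine (A.compr₂ (b.coord i)).apply_self_eq_zero_of_mul_apply_self_eq_zero
    (f.compr₂ (LinearMap.applyₗ w₀)) (fun w => ?_) ⟨w₀, by simpa using hw₀⟩ w
  obtain ⟨a, ha⟩ := hrad w
  have := sub_mul_apply_of_apply_self_eq_smul hA hsym₁ hsym₂ hAsym ha w₀
  simp only [hχ, LinearMap.zero_apply, zero_mul, zero_sub, zero_div] at this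
  simp only [LinearMap.compr₂_apply, ha, map_smul, Module.Basis.coord_apply,
    smul_eq_mul, LinearMap.applyₗ_apply_apply]
  linear_combination (-b.repr w i / 2) * this

theorem hasLinearFactor_of_forall_apply_self_eq_smul (hχ : χ ≠ 0) (hf : ∃ w : W, f w w w ≠ 0)
    (hrad : ∀ w : W, ∃ a : K, A w w = a • w) : HasLinearFactor f := by
  obtain ⟨s₀, hs₀⟩ : ∃ s₀, χ s₀ ≠ 0 := by simpa [LinearMap.ext_iff] using hχ
  have hcube : ∀ s w : W, (χ s₀ * f w w s - χ s * f w w s₀) * f w w w = 0 := fun s w => by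
    obtain ⟨a, ha⟩ := hrad w
    have e := sub_mul_apply_of_apply_self_eq_smul hA hsym₁ hsym₂ hAsym ha s
    have e₀ := sub_mul_apply_of_apply_self_eq_smul hA hsym₁ hsym₂ hAsym ha s₀
    by_cases hw : f w w w = 0
    · rw [hw, mul_zero]
    have hne : χ w - 2 * a ≠ 0 := fun h0 => by
      rw [h0, zero_mul] at e₀
      exact mul_ne_zero hs₀ hw (by linear_combination -3 * e₀)
    have : (χ w - 2 * a) * (χ s₀ * f w w s - χ s * f w w s₀) = 0 := by
      linear_combination χ s₀ * e - χ s * e₀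
    rw [(mul_eq_zero.mp this).resolve_left hne, zero_mul]
  have hprop : ∀ s w : W, χ s₀ * f w w s - χ s * f w w s₀ = 0 := fun s w => by
    simpa using (χ s₀ • f.compr₂ (LinearMap.applyₗ s) - χ s • f.compr₂ (LinearMap.applyₗ s₀))
      |>.apply_self_eq_zero_of_mul_cube_eq_zero f (fun w => by simpa using hcube s w) hf w
  refine hasLinearFactor_of_forall_eq_mul hf χ ((χ s₀)⁻¹ • f.compr₂ (LinearMap.applyₗ s₀))
    fun w => ?_
  simp only [LinearMap.smul_apply, LinearMap.compr₂_apply, LinearMap.applyₗ_apply_apply,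
    smul_eq_mul]
  field_simp
  linear_combination hprop w w

end IsProlongation

end Prolongation

/-- If `f` is irreducible and admits a nonzero prolongation `A`,
then there is a smooth point `w ∈ Ŷ` (i.e. `f(w,w,w) = 0`, `f_{ww} ≠ 0`) whose
Gauss space `Γ_w` strictly contains the line `ℂ·w`; i.e. the Gauss map of `Y`
is degenerate. -/
theorem gauss_map_degenerate_of_prolongation
    {W : Type*} [AddCommGroup W] [Module ℂ W] [FiniteDimensional ℂ W]
    (f : W →ₗ[ℂ] W →ₗ[ℂ] W →ₗ[ℂ] ℂ)
    (hsym1 : ∀ u v w : W, f u v w = f v u w)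
    (hsym2 : ∀ u v w : W, f u v w = f u w v)
    (hf : f ≠ 0)
    (hirr : ¬ ∃ (lam : W →ₗ[ℂ] ℂ) (B : W →ₗ[ℂ] W →ₗ[ℂ] ℂ),
      lam ≠ 0 ∧ B ≠ 0 ∧ (∀ u v : W, B u v = B v u) ∧ ∀ w : W, f w w w = lam w * B w w)
    (A : W →ₗ[ℂ] W →ₗ[ℂ] W) (hA0 : A ≠ 0) (hAsym : ∀ u v : W, A u v = A v u)
    (χ : W →ₗ[ℂ] ℂ)
    (hA : ∀ s u v w : W,
      f (A w u) v s + f u (A w v) s + f u v (A w s) = χ w * f u v s) :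
    ∃ w : W, f w w w = 0 ∧ f w w ≠ 0 ∧
      ∃ v : W, (∃ c : ℂ, f v w = c • f w w) ∧ v ∉ Submodule.span ℂ ({w} : Set W) := by
  by_contra! hcon
  have hA' : IsProlongation f A χ := hA
  have hF : ∃ w : W, f w w w ≠ 0 := by
    by_contra! h
    exact hf (eq_zero_of_forall_cube_eq_zero f hsym1 hsym2 h)
  have hsmooth : ∀ w : W, f w w w = 0 → f w w ≠ 0 → ∃ a : ℂ, A w w = a • w := fun w hw hww => by
    obtain ⟨a, ha⟩ := Submodule.mem_span_singleton.mp <| hcon w hw hww (A w w)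
      ⟨_, hA'.apply_self_eq_smul_of_apply_self_eq_zero hsym1 hsym2 hAsym hw⟩
    exact ⟨a, ha.symm⟩
  have hrad := forall_apply_self_eq_smul_of_smooth hF hirr
    (three_le_finrank_of_not_hasLinearFactor f hsym1 hsym2 hF hirr) A hsmooth
  by_cases hχ : χ = 0
  · exact hA0 (hA'.eq_zero_of_forall_apply_self_eq_smul hsym1 hsym2 hAsym hχ hF hrad)
  · exact hirr (hA'.hasLinearFactor_of_forall_apply_self_eq_smul hsym1 hsym2 hAsym hχ hF hrad)
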